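/- arXiv:1605.08924 — 2 statements merged into one kernel-verified Lean document; each statement's English description precedes it below -/
import Mathlib

section
/- Let 𝓗 be a complex Hilbert space and A : 𝓗 → 𝓗 a continuous linear operator that possesses a Hilbert basis (complete orthonormal family) consisting of eigenvectors of A. Let P be a nonzero orthogonal projection on 𝓗 commuting with A (A ∘ P = P ∘ A). Then there exists a nonzero vector v in the range of P and a scalar λ with A v = λ v; i.e. A has at least one eigenvector in the range of P. (Existence part of the Cyclic Bloch Theorem: the Hamiltonian has at least one eigenvector in every symmetry subspace V^ν.) -/
open ContinuousLinearMap

namespace HilbertBasis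

variable {ι 𝕜 E F : Type*} [RCLike 𝕜] [NormedAddCommGroup E] [InnerProductSpace 𝕜 E]
  [TopologicalSpace F] [T2Space F] [AddCommMonoid F] [Module 𝕜 F]

theorem ext_continuousLinearMap (b : HilbertBasis ι 𝕜 E) {f g : E →L[𝕜] F}
    (h : ∀ i, f (b i) = g (b i)) : f = g :=
  ContinuousLinearMap.ext_on (Submodule.dense_iff_topologicalClosure_eq_top.2 b.dense_span)
    (by rintro _ ⟨i, rfl⟩; exact h i)

theorem exists_apply_ne_zero (b : HilbertBasis ι 𝕜 E) {f : E →L[𝕜] F} (hf : f ≠ 0) :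
    ∃ i, f (b i) ≠ 0 := by
  by_contra! h
  exact hf (b.ext_continuousLinearMap fun i => by rw [h i, zero_apply])

end HilbertBasis

theorem exists_eigenvector_in_range_of_commuting_projection_general
    {H : Type*} [NormedAddCommGroup H] [InnerProductSpace ℂ H]
    (A : H →L[ℂ] H)
    (hbasis : ∃ (ι : Type) (b : HilbertBasis ι ℂ H) (μ : ι → ℂ),
      ∀ i : ι, A (b i) = μ i • b i)
    (P : H →L[ℂ] H) (hP : P ≠ 0)
    (hcomm : A ∘L P = P ∘L A) :
    ∃ v ∈ LinearMap.range (P : H →ₗ[ℂ] H), v ≠ 0 ∧ ∃ lam : ℂ, A v = lam • v := by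
  obtain ⟨ι, b, μ, hμ⟩ := hbasis
  obtain ⟨i, hi⟩ := b.exists_apply_ne_zero hP
  refine ⟨P (b i), LinearMap.mem_range_self _ _, hi, μ i, ?_⟩
  calc A (P (b i)) = P (A (b i)) := congr($hcomm (b i))
    _ = μ i • P (b i) := by rw [hμ i, map_smul]

/-- existence part of the Cyclic Bloch Theorem: let `A` be a continuous
linear operator on a complex Hilbert space possessing a Hilbert basis of eigenvectors,
and let `P` be a nonzero orthogonal projection (idempotent and self-adjoint) commuting
with `A`. Then `A` has at least one (nonzero) eigenvector lying in the range of `P`. -/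
theorem exists_eigenvector_in_range_of_commuting_projection
    {H : Type*} [NormedAddCommGroup H] [InnerProductSpace ℂ H] [CompleteSpace H]
    (A : H →L[ℂ] H)
    (hbasis : ∃ (ι : Type) (b : HilbertBasis ι ℂ H) (μ : ι → ℂ),
      ∀ i : ι, A (b i) = μ i • b i)
    (P : H →L[ℂ] H) (hidem : P ∘L P = P) (hsa : IsSelfAdjoint P) (hP : P ≠ 0)
    (hcomm : A ∘L P = P ∘L A) :
    ∃ v ∈ LinearMap.range (P : H →ₗ[ℂ] H), v ≠ 0 ∧ ∃ lam : ℂ, A v = lam • v :=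
  exists_eigenvector_in_range_of_commuting_projection_general A hbasis P hP hcomm
end

section
/- Let η : ℝ → ℝ be continuously differentiable and vanishing outside a bounded interval, let u : ℝ → ℝ be bounded measurable, and let W : ℝ³ → ℝ be bounded measurable and invariant under the cyclic group (W(R^γ x) = W(x) for all γ, x). Define the Hellmann–Feynman force field F(y) = ∫_{ℝ³} ∇_x [η(|x − y|)] · (W(x) − u(|x − y|)) dx (a vector-valued integral over x, with the gradient taken in x). Then F is rotation-equivariant with respect to the cyclic group: F(R^γ y) = R^γ F(y) for every γ ∈ ℤ/Nℤ and y ∈ ℝ³; hence the force on any atom of the cyclic structure is determined by the force on the corresponding atom in the fundamental domain. -/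
/-!
`R^γ` is a linear isometry of `ℝ³`, so the integrand at `(R^γ x, R^γ y)` is `R^γ` applied to the
integrand at `(x, y)`: `W` is invariant, distances are preserved, and the gradient of the radial
function `z ↦ η ‖z - y‖` transforms covariantly under isometries. Substituting `x ↦ R^γ x`,
which preserves Lebesgue measure, and pulling the isometry `R^γ` out of the integral gives the
equivariance.
-/

open Matrix MeasureTheory

/-- The rotation by angle `2πγ/N` about the `e₃`-axis. -/
noncomputable def Rmat (N : ℕ) (γ : ZMod N) : Matrix (Fin 3) (Fin 3) ℝ :=
  !![Real.cos (2 * Real.pi * γ.val / N), -Real.sin (2 * Real.pi * γ.val / N), 0;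
     Real.sin (2 * Real.pi * γ.val / N),  Real.cos (2 * Real.pi * γ.val / N), 0;
     0, 0, 1]

/-- The rotation `R^γ`, acting on Euclidean space `ℝ³`. -/
noncomputable def rot (N : ℕ) (γ : ZMod N) :
    EuclideanSpace ℝ (Fin 3) →ₗ[ℝ] EuclideanSpace ℝ (Fin 3) :=
  Matrix.toEuclideanLin (Rmat N γ)

theorem Matrix.norm_toEuclideanLin_of_mem_unitaryGroup {n 𝕜 : Type*} [Fintype n] [DecidableEq n]
    [RCLike 𝕜] {A : Matrix n n 𝕜} (hA : A ∈ unitaryGroup n 𝕜) (x : EuclideanSpace 𝕜 n) :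
    ‖toEuclideanLin A x‖ = ‖x‖ := by
  have hAA : toEuclideanLin Aᴴ (toEuclideanLin A x) = x := by
    rw [← LinearMap.comp_apply, ← toLpLin_mul, ← star_eq_conjTranspose,
      (mem_unitaryGroup_iff').1 hA, toLpLin_one, LinearMap.id_apply]
  have h : ((‖toEuclideanLin A x‖ : ℝ) : 𝕜) ^ 2 = ((‖x‖ : ℝ) : 𝕜) ^ 2 := by
    rw [← inner_self_eq_norm_sq_to_K, ← inner_self_eq_norm_sq_to_K,
      ← LinearMap.adjoint_inner_right, ← toEuclideanLin_conjTranspose_eq_adjoint, hAA]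
  exact (sq_eq_sq₀ (norm_nonneg _) (norm_nonneg _)).1 (by exact_mod_cast h)

theorem LinearIsometryEquiv.gradient_comp {𝕜 E F : Type*} [RCLike 𝕜] [NormedAddCommGroup E]
    [InnerProductSpace 𝕜 E] [CompleteSpace E] [NormedAddCommGroup F] [InnerProductSpace 𝕜 F]
    [CompleteSpace F] (e : E ≃ₗᵢ[𝕜] F) (f : F → 𝕜) (x : E) :
    gradient (f ∘ e) x = e.symm (gradient f (e x)) := by
  refine ext_inner_right 𝕜 fun v => ?_
  have hfderiv := e.toContinuousLinearEquiv.comp_right_fderiv (f := f) (x := x)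
  rw [coe_toContinuousLinearEquiv] at hfderiv
  rw [inner_gradient_left, hfderiv, ← e.inner_map_map, e.apply_symm_apply, inner_gradient_left]
  rfl

theorem LinearIsometryEquiv.gradient_radial_map {𝕜 E : Type*} [RCLike 𝕜] [NormedAddCommGroup E]
    [InnerProductSpace 𝕜 E] [CompleteSpace E] (e : E ≃ₗᵢ[𝕜] E) (η : ℝ → 𝕜) (x y : E) :
    gradient (fun z => η ‖z - e y‖) (e x) = e (gradient (fun z => η ‖z - y‖) x) := by
  have hcomp : (fun z => η ‖z - e y‖) ∘ e = fun z => η ‖z - y‖ := by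
    funext z
    simp only [Function.comp_apply, ← map_sub, e.norm_map]
  rw [← e.apply_symm_apply (gradient (fun z => η ‖z - e y‖) (e x)), ← e.gradient_comp, hcomp]

theorem LinearIsometryEquiv.integral_eq_map_integral_of_comp_eq {E F G : Type*}
    [NormedAddCommGroup E] [InnerProductSpace ℝ E] [FiniteDimensional ℝ E] [MeasurableSpace E]
    [BorelSpace E] [NormedAddCommGroup F] [NormedSpace ℝ F] [CompleteSpace F]
    [NormedAddCommGroup G] [NormedSpace ℝ G] [CompleteSpace G]
    (e : E ≃ₗᵢ[ℝ] E) (L : F →ₗᵢ[ℝ] G) {f : E → F} {g : E → G} (hgf : ∀ x, g (e x) = L (f x)) :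
    ∫ x, g x = L (∫ x, f x) := by
  rw [← e.measurePreserving.integral_comp e.toHomeomorph.measurableEmbedding]
  simp only [hgf, L.integral_comp_comm]

theorem Rmat_mem_orthogonalGroup (N : ℕ) (γ : ZMod N) :
    Rmat N γ ∈ orthogonalGroup (Fin 3) ℝ := by
  rw [mem_orthogonalGroup_iff]
  have hθ := Real.cos_sq_add_sin_sq (2 * Real.pi * γ.val / N)
  ext i j
  fin_cases i <;> fin_cases j <;> simp [Rmat, mul_apply, Fin.sum_univ_three] <;>
    first | ring1 | linear_combination hθ

noncomputable def rotIso (N : ℕ) (γ : ZMod N) :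
    EuclideanSpace ℝ (Fin 3) ≃ₗᵢ[ℝ] EuclideanSpace ℝ (Fin 3) :=
  LinearIsometry.toLinearIsometryEquiv
    ⟨rot N γ, norm_toEuclideanLin_of_mem_unitaryGroup (Rmat_mem_orthogonalGroup N γ)⟩ rfl

theorem rotIso_apply (N : ℕ) (γ : ZMod N) (x : EuclideanSpace ℝ (Fin 3)) :
    rotIso N γ x = rot N γ x := rfl

theorem hellmannFeynman_force_equivariant_general (N : ℕ)
    (η : ℝ → ℝ)
    (u : ℝ → ℝ)
    (W : EuclideanSpace ℝ (Fin 3) → ℝ)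
    (hWinv : ∀ (γ : ZMod N) (x : EuclideanSpace ℝ (Fin 3)), W (rot N γ x) = W x)
    (γ : ZMod N) (y : EuclideanSpace ℝ (Fin 3)) :
    (∫ x : EuclideanSpace ℝ (Fin 3),
        (W x - u ‖x - rot N γ y‖) • gradient (fun z => η ‖z - rot N γ y‖) x)
      = rot N γ (∫ x : EuclideanSpace ℝ (Fin 3),
          (W x - u ‖x - y‖) • gradient (fun z => η ‖z - y‖) x) := by
  set e := rotIso N γ
  simp only [← rotIso_apply] at hWinv ⊢
  refine e.integral_eq_map_integral_of_comp_eq e.toLinearIsometry fun x => ?_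
  rw [e.gradient_radial_map, ← map_sub, e.norm_map, hWinv]
  exact (map_smul e _ _).symm

/-- equivariance of the Hellmann–Feynman force: with `η` a `C¹` radial
pseudocharge profile vanishing outside a bounded interval, `u` bounded measurable, and
`W` bounded measurable and invariant under the cyclic group, the force field
`F(y) = ∫ ∇_x[η(|x-y|)] (W(x) - u(|x-y|)) dx` satisfies `F(R^γ y) = R^γ F(y)`. -/
theorem hellmannFeynman_force_equivariant (N : ℕ) [NeZero N]
    (η : ℝ → ℝ) (hη : ContDiff ℝ 1 η) (r₀ : ℝ)
    (hηsupp : ∀ r : ℝ, r ∉ Set.Icc 0 r₀ → η r = 0)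
    (u : ℝ → ℝ) (humeas : Measurable u) (hubd : ∃ C : ℝ, ∀ r, |u r| ≤ C)
    (W : EuclideanSpace ℝ (Fin 3) → ℝ)
    (hWmeas : Measurable W) (hWbd : ∃ C : ℝ, ∀ x, |W x| ≤ C)
    (hWinv : ∀ (γ : ZMod N) (x : EuclideanSpace ℝ (Fin 3)), W (rot N γ x) = W x)
    (γ : ZMod N) (y : EuclideanSpace ℝ (Fin 3)) :
    (∫ x : EuclideanSpace ℝ (Fin 3),
        (W x - u ‖x - rot N γ y‖) • gradient (fun z => η ‖z - rot N γ y‖) x)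
      = rot N γ (∫ x : EuclideanSpace ℝ (Fin 3),
          (W x - u ‖x - y‖) • gradient (fun z => η ‖z - y‖) x) :=
  hellmannFeynman_force_equivariant_general N η u W hWinv γ y
end
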